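/- Assume Ω ≠ 0 and 9Ω² - 4σ = 0, and set h := (3Ω/2)·u + z. Then: B(h,h) = 0; W(h) = -(Ω/2)·h; (W + (Ω/2)·id) ∘ (W + (Ω/2)·id) ∘ (W - Ω·id) = 0; and (W + (Ω/2)·id) ∘ (W - Ω·id) ≠ 0. Hence W has the double eigenvalue -Ω/2 with the null vector h = (3Ω/2)𝒰 + 𝒵 as eigenvector and the simple eigenvalue Ω, with minimal polynomial (X + Ω/2)²(X - Ω). (The algebraic content of the second case of Proposition 5 of the paper: Petrov–Bel type II with (3Ω/2)𝒰 + 𝒵 the canonical null SD bivector.) -/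

import Mathlib

open Module LinearMap

noncomputable section

/-- The endomorphism `W(x) := 3Ω·B(u,x)·u + Ω·x + B(u,x)·z + B(z,x)·u` of `V`,
representing the self-dual Weyl tensor `𝒲 = 3Ω·𝒰⊗𝒰 + Ω·𝒢 + 𝒰⊗̃𝒵` of a space-time
admitting a 2+2 umbilical structure acting on self-dual bivectors. -/
def Wmap {V : Type*} [AddCommGroup V] [Module ℂ V]
    (B : LinearMap.BilinForm ℂ V) (Ω : ℂ) (u z : V) : V →ₗ[ℂ] V :=
  (3 * Ω) • (B u).smulRight u + Ω • LinearMap.id + (B u).smulRight z + (B z).smulRight u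

end

/-!
Write `h = (3Ω/2)u + z` and `N = W + (Ω/2)·id`. Using `B(u,u) = -1`, `B(u,z) = 0` and
`σ = 9Ω²/4` one finds `N u = -h` and `N z = (3Ω/2) h`, hence `N h = 0`, i.e. `h` is an
eigenvector for `-Ω/2`. Since `W - Ω·id` maps everything into `span {u, z}`, `N²(W - Ω·id) = 0`,
while `N (W - Ω·id) u = (3Ω/2) h ≠ 0` because `B(u,h) = -3Ω/2`.
-/

section

variable {V : Type*} [AddCommGroup V] [Module ℂ V] (B : LinearMap.BilinForm ℂ V) (Ω : ℂ)
  {u z : V}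

theorem Wmap_apply (x : V) :
    Wmap B Ω u z x = (3 * Ω * B u x) • u + Ω • x + B u x • z + B z x • u := by
  simp [Wmap, mul_smul]

theorem Wmap_sub_smul_id_apply (x : V) :
    (Wmap B Ω u z - Ω • LinearMap.id : V →ₗ[ℂ] V) x
      = (3 * Ω * B u x + B z x) • u + B u x • z := by
  simp only [LinearMap.sub_apply, LinearMap.smul_apply, LinearMap.id_apply, Wmap_apply]
  module

theorem Wmap_add_half_smul_id_apply_u (hu : B u u = -1) (hzu : B z u = 0) :
    (Wmap B Ω u z + (Ω / 2) • LinearMap.id : V →ₗ[ℂ] V) u = -((3 * Ω / 2) • u + z) := by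
  simp only [LinearMap.add_apply, LinearMap.smul_apply, LinearMap.id_apply, Wmap_apply, hu,
    hzu]
  module

theorem Wmap_add_half_smul_id_apply_z (huz : B u z = 0)
    (hσ : 9 * Ω ^ 2 - 4 * B z z = 0) :
    (Wmap B Ω u z + (Ω / 2) • LinearMap.id : V →ₗ[ℂ] V) z
      = (3 * Ω / 2) • ((3 * Ω / 2) • u + z) := by
  have hzz : B z z = 9 * Ω ^ 2 / 4 := by linear_combination -hσ / 4
  simp only [LinearMap.add_apply, LinearMap.smul_apply, LinearMap.id_apply, Wmap_apply, huz,
    hzz]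
  module

theorem Wmap_add_half_smul_id_apply_null (hu : B u u = -1) (hzu : B z u = 0)
    (huz : B u z = 0) (hσ : 9 * Ω ^ 2 - 4 * B z z = 0) :
    (Wmap B Ω u z + (Ω / 2) • LinearMap.id : V →ₗ[ℂ] V) ((3 * Ω / 2) • u + z) = 0 := by
  rw [map_add, map_smul, Wmap_add_half_smul_id_apply_u B Ω hu hzu,
    Wmap_add_half_smul_id_apply_z B Ω huz hσ]
  module

theorem Wmap_apply_null (hu : B u u = -1) (hzu : B z u = 0) (huz : B u z = 0)
    (hσ : 9 * Ω ^ 2 - 4 * B z z = 0) :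
    Wmap B Ω u z ((3 * Ω / 2) • u + z) = (-(Ω / 2)) • ((3 * Ω / 2) • u + z) := by
  have hN := Wmap_add_half_smul_id_apply_null B Ω hu hzu huz hσ
  rw [LinearMap.add_apply, LinearMap.smul_apply, LinearMap.id_apply] at hN
  rw [neg_smul]
  exact eq_neg_of_add_eq_zero_left hN

theorem Wmap_add_half_smul_id_sq_comp_sub_smul_id (hu : B u u = -1) (hzu : B z u = 0)
    (huz : B u z = 0) (hσ : 9 * Ω ^ 2 - 4 * B z z = 0) :
    (Wmap B Ω u z + (Ω / 2) • LinearMap.id) ∘ₗ (Wmap B Ω u z + (Ω / 2) • LinearMap.id)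
      ∘ₗ (Wmap B Ω u z - Ω • LinearMap.id) = 0 := by
  ext x
  rw [LinearMap.comp_apply, LinearMap.comp_apply, Wmap_sub_smul_id_apply, map_add, map_smul,
    map_smul, Wmap_add_half_smul_id_apply_u B Ω hu hzu,
    Wmap_add_half_smul_id_apply_z B Ω huz hσ]
  have hN := Wmap_add_half_smul_id_apply_null B Ω hu hzu huz hσ
  set h := (3 * Ω / 2) • u + z
  simp only [map_add, map_neg, map_smul, hN, smul_zero, neg_zero, add_zero, LinearMap.zero_apply]

theorem apply_null_self_eq_zero (hu : B u u = -1) (hzu : B z u = 0) (huz : B u z = 0)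
    (hσ : 9 * Ω ^ 2 - 4 * B z z = 0) :
    B ((3 * Ω / 2) • u + z) ((3 * Ω / 2) • u + z) = 0 := by
  simp only [map_add, map_smul, LinearMap.add_apply, LinearMap.smul_apply, hu, huz, hzu,
    smul_eq_mul]
  linear_combination -hσ / 4

theorem Wmap_add_half_smul_id_comp_sub_smul_id_ne_zero (hΩ : Ω ≠ 0) (hu : B u u = -1)
    (hzu : B z u = 0) (huz : B u z = 0) (hσ : 9 * Ω ^ 2 - 4 * B z z = 0) :
    (Wmap B Ω u z + (Ω / 2) • LinearMap.id) ∘ₗ (Wmap B Ω u z - Ω • LinearMap.id) ≠ 0 := by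
  intro h0
  have hNu : ((Wmap B Ω u z + (Ω / 2) • LinearMap.id) ∘ₗ (Wmap B Ω u z - Ω • LinearMap.id)) u
      = (3 * Ω / 2) • ((3 * Ω / 2) • u + z) := by
    rw [LinearMap.comp_apply, Wmap_sub_smul_id_apply, hu, hzu, map_add, map_smul, map_smul,
      Wmap_add_half_smul_id_apply_u B Ω hu hzu, Wmap_add_half_smul_id_apply_z B Ω huz hσ]
    module
  rw [h0, LinearMap.zero_apply] at hNu
  have hBu := congrArg (B u) hNu
  simp only [map_zero, map_smul, map_add, hu, huz, smul_eq_mul] at hBu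
  have hΩsq : Ω ^ 2 = 0 := by linear_combination (4 / 9 : ℂ) * hBu
  exact hΩ (pow_eq_zero_iff two_ne_zero |>.mp hΩsq)

end

theorem typeII_second_case_general
    {V : Type*} [AddCommGroup V] [Module ℂ V]
    (B : LinearMap.BilinForm ℂ V) (hBsym : ∀ x y, B x y = B y x)
    (Ω : ℂ) (u z : V) (hu : B u u = -1) (huz : B u z = 0)
    (hΩ : Ω ≠ 0) (hσ : 9 * Ω ^ 2 - 4 * B z z = 0) :
    B ((3 * Ω / 2) • u + z) ((3 * Ω / 2) • u + z) = 0 ∧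
    Wmap B Ω u z ((3 * Ω / 2) • u + z) = (-(Ω / 2)) • ((3 * Ω / 2) • u + z) ∧
    (Wmap B Ω u z + (Ω / 2) • LinearMap.id) ∘ₗ (Wmap B Ω u z + (Ω / 2) • LinearMap.id)
        ∘ₗ (Wmap B Ω u z - Ω • LinearMap.id) = 0 ∧
    (Wmap B Ω u z + (Ω / 2) • LinearMap.id) ∘ₗ (Wmap B Ω u z - Ω • LinearMap.id) ≠ 0 := by
  have hzu : B z u = 0 := (hBsym z u).trans huz
  exact ⟨apply_null_self_eq_zero B Ω hu hzu huz hσ, Wmap_apply_null B Ω hu hzu huz hσ,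
    Wmap_add_half_smul_id_sq_comp_sub_smul_id B Ω hu hzu huz hσ,
    Wmap_add_half_smul_id_comp_sub_smul_id_ne_zero B Ω hΩ hu hzu huz hσ⟩

/-- Proposition 5, second type II case: if `Ω ≠ 0` and `9Ω² - 4σ = 0`,
then `h := (3Ω/2)u + z` satisfies `B(h,h) = 0`, `W(h) = -(Ω/2)·h`,
`(W + (Ω/2)·id)∘(W + (Ω/2)·id)∘(W - Ω·id) = 0` and `(W + (Ω/2)·id)∘(W - Ω·id) ≠ 0`. -/
theorem typeII_second_case
    {V : Type*} [AddCommGroup V] [Module ℂ V] [FiniteDimensional ℂ V]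
    (hdim : finrank ℂ V = 3)
    (B : LinearMap.BilinForm ℂ V) (hBsym : ∀ x y, B x y = B y x)
    (hBnd : B.Nondegenerate)
    (Ω : ℂ) (u z : V) (hu : B u u = -1) (huz : B u z = 0)
    (hΩ : Ω ≠ 0) (hσ : 9 * Ω ^ 2 - 4 * B z z = 0) :
    B ((3 * Ω / 2) • u + z) ((3 * Ω / 2) • u + z) = 0 ∧
    Wmap B Ω u z ((3 * Ω / 2) • u + z) = (-(Ω / 2)) • ((3 * Ω / 2) • u + z) ∧
    (Wmap B Ω u z + (Ω / 2) • LinearMap.id) ∘ₗ (Wmap B Ω u z + (Ω / 2) • LinearMap.id)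
        ∘ₗ (Wmap B Ω u z - Ω • LinearMap.id) = 0 ∧
    (Wmap B Ω u z + (Ω / 2) • LinearMap.id) ∘ₗ (Wmap B Ω u z - Ω • LinearMap.id) ≠ 0 :=
  typeII_second_case_general B hBsym Ω u z hu huz hΩ hσ
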